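/- Totality (termination) of evaluation for the simply-typed λ-calculus with booleans but without references: every term well-typed in the empty context under the standard typing rules evaluates, under the big-step environment semantics with closures, to a value; i.e., if ∅ ⊢ t : T then there exists a value v with ⟨t, ∅⟩ ⇓ v. -/

import Mathlib

/-- Terms of STLC with booleans (de Bruijn indices). -/
inductive Tm : Type
  | tt : Tm
  | ff : Tm
  | var : ℕ → Tm
  | abs : Tm → Tm
  | app : Tm → Tm → Tm

/-- Types. -/
inductive Ty : Type
  | bool : Ty
  | arrow : Ty → Ty → Ty

/-- Values: booleans and closures over value environments. -/
inductive Val : Type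
  | vtt : Val
  | vff : Val
  | clos : List Val → Tm → Val

/-- Standard STLC typing, with contexts as lists of types. -/
inductive HasType : List Ty → Tm → Ty → Prop
  | tt {Γ} : HasType Γ .tt .bool
  | ff {Γ} : HasType Γ .ff .bool
  | var {Γ n T} : Γ[n]? = some T → HasType Γ (.var n) T
  | abs {Γ t T U} : HasType (T :: Γ) t U → HasType Γ (.abs t) (.arrow T U)
  | app {Γ t₁ t₂ T U} : HasType Γ t₁ (.arrow T U) → HasType Γ t₂ T →
      HasType Γ (.app t₁ t₂) U

/-- Big-step environment semantics with closures. -/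
inductive Eval : List Val → Tm → Val → Prop
  | tt {H} : Eval H .tt .vtt
  | ff {H} : Eval H .ff .vff
  | var {H n v} : H[n]? = some v → Eval H (.var n) v
  | abs {H t} : Eval H (.abs t) (.clos H t)
  | app {H t₁ t₂ H' t v v'} :
      Eval H t₁ (.clos H' t) → Eval H t₂ v → Eval (v :: H') t v' →
      Eval H (.app t₁ t₂) v'

/-! Unary logical relation: a term typed in `Γ`, run under an environment whose values lie pointwise
in the interpretations of the types of `Γ`, evaluates to a value in the interpretation of its type.
This goes by induction on the typing derivation, the arrow clause of the interpretation being exactly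
strong enough to carry the application case; closed terms are the case of the empty environment. -/

def Ty.Interp : Ty → Val → Prop
  | .bool, v => v = .vtt ∨ v = .vff
  | .arrow T U, v => ∃ H t, v = .clos H t ∧
      ∀ a, T.Interp a → ∃ r, Eval (a :: H) t r ∧ U.Interp r

theorem List.Forall₂.exists_getElem?_of_getElem? {α β : Type*} {R : α → β → Prop} :
    ∀ {l₁ : List α} {l₂ : List β} {n : ℕ} {a : α}, List.Forall₂ R l₁ l₂ → l₁[n]? = some a →
      ∃ b, l₂[n]? = some b ∧ R a b
  | _ :: _, b :: _, 0, _, .cons hab _, h => ⟨b, rfl, by cases h; exact hab⟩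
  | _ :: _, _ :: _, _ + 1, _, .cons _ hl, h => hl.exists_getElem?_of_getElem? h

theorem HasType.eval_interp {Γ : List Ty} {t : Tm} {T : Ty} (h : HasType Γ t T) {H : List Val}
    (hH : List.Forall₂ Ty.Interp Γ H) : ∃ v, Eval H t v ∧ T.Interp v := by
  induction h generalizing H with
  | tt => exact ⟨.vtt, .tt, .inl rfl⟩
  | ff => exact ⟨.vff, .ff, .inr rfl⟩
  | var hn =>
      obtain ⟨v, hv, hvT⟩ := hH.exists_getElem?_of_getElem? hn
      exact ⟨v, .var hv, hvT⟩
  | abs _ ih => exact ⟨.clos H _, .abs, H, _, rfl, fun a ha => ih (.cons ha hH)⟩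
  | app _ _ ih₁ ih₂ =>
      obtain ⟨_, hf, _, _, rfl, hbody⟩ := ih₁ hH
      obtain ⟨a, ha, haT⟩ := ih₂ hH
      obtain ⟨r, hr, hrU⟩ := hbody a haT
      exact ⟨r, .app hf ha hr, hrU⟩

/-- Totality: every closed well-typed term evaluates to a value. -/
theorem stlc_termination (t : Tm) (T : Ty) (h : HasType [] t T) :
    ∃ v, Eval [] t v := by
  obtain ⟨v, hv, -⟩ := h.eval_interp .nil
  exact ⟨v, hv⟩
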